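/- arXiv:cs/0010005 — 7 statements merged into one kernel-verified Lean document; each statement's English description precedes it below -/
import Mathlib

section
/- For every total, associative function σ : Σ* × Σ* → Σ* and every natural number k, there exists a string t ∈ Σ* for which at least one of the following holds: (a) there exist at least k distinct strings x ∈ Σ* with x ≠ t such that σ(x,y) = t for some y ∈ Σ*; (b) there exist at least k distinct strings y ∈ Σ* with y ≠ t such that σ(x,y) = t for some x ∈ Σ*. -/
/-- For every total, associative function σ : Σ* × Σ* → Σ* and every
natural number k, there exists a string t such that either at least k distinct
strings x ≠ t satisfy σ(x,y) = t for some y, or at least k distinct strings y ≠ t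
satisfy σ(x,y) = t for some x. -/
theorem stmt_0 (σ : List Bool → List Bool → List Bool)
    (hassoc : ∀ x y z : List Bool, σ (σ x y) z = σ x (σ y z)) (k : ℕ) :
    ∃ t : List Bool,
      (∃ S : Finset (List Bool), S.card = k ∧
        ∀ x ∈ S, x ≠ t ∧ ∃ y : List Bool, σ x y = t) ∨
      (∃ S : Finset (List Bool), S.card = k ∧
        ∀ y ∈ S, y ≠ t ∧ ∃ x : List Bool, σ x y = t) := by
  by_cases hfin : ∀ t x : List Bool, {y | σ x y = t}.Finite
  · -- Build a chain of length k whose elements all left-divide the endpoint.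
    suffices H : ∀ m : ℕ, ∃ (t : List Bool) (F : Finset (List Bool)),
        F.card = m ∧ t ∉ F ∧ ∀ x ∈ F, ∃ y, σ x y = t by
      obtain ⟨t, F, hcard, htF, hdiv⟩ := H k
      exact ⟨t, Or.inl ⟨F, hcard, fun x hx =>
        ⟨fun hxt => htF (hxt ▸ hx), hdiv x hx⟩⟩⟩
    intro m
    induction m with
    | zero =>
      exact ⟨[], ∅, rfl, Finset.notMem_empty _,
        fun x hx => absurd hx (Finset.notMem_empty x)⟩
    | succ n ih =>
      obtain ⟨t, F, hcard, htF, hdiv⟩ := ih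
      have hbad : {c | σ t c ∈ (insert t F : Finset (List Bool))}.Finite := by
        have heq : {c | σ t c ∈ (insert t F : Finset (List Bool))} =
            ⋃ v ∈ (insert t F : Finset (List Bool)), {c | σ t c = v} := by
          ext c; simp
        rw [heq]
        exact Set.Finite.biUnion (Finset.finite_toSet _) (fun v _ => hfin v t)
      obtain ⟨c, hc⟩ := hbad.infinite_compl.nonempty
      refine ⟨σ t c, insert t F, ?_, hc, ?_⟩
      · rw [Finset.card_insert_of_notMem htF, hcard]
      · intro x hx
        rcases Finset.mem_insert.mp hx with h | h
        · exact ⟨c, by rw [h]⟩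
        · obtain ⟨y, hy⟩ := hdiv x h
          exact ⟨σ y c, by rw [← hassoc, hy]⟩
  · push_neg at hfin
    obtain ⟨t, x, hinf⟩ := hfin
    have hinf' : ({y | σ x y = t} \ {t}).Infinite :=
      Set.Infinite.diff hinf (Set.finite_singleton t)
    obtain ⟨S, hsub, hScard⟩ := hinf'.exists_subset_card_eq k
    refine ⟨t, Or.inr ⟨S, hScard, fun y hy => ?_⟩⟩
    obtain ⟨h1, h2⟩ := hsub hy
    exact ⟨h2, x, h1⟩
end

section
/- No total, associative, O(1)-to-one function Σ* × Σ* → Σ* exists. Precisely: for every total, associative function σ : Σ* × Σ* → Σ* and every constant c ∈ ℕ, there exists a string t ∈ Σ* such that the preimage set σ⁻¹(t) = {(x,y) ∈ Σ* × Σ* | σ(x,y) = t} contains more than c distinct pairs. -/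
/-- Auxiliary: given that every forward set is infinite, pick an element of
`Set.range (σ x)` longer than `x`. -/
noncomputable def nextEl (σ : List Bool → List Bool → List Bool)
    (hinf : ∀ x : List Bool, (Set.range (σ x)).Infinite) (x : List Bool) : List Bool :=
  (((hinf x).diff (List.finite_length_le Bool x.length)).nonempty).choose

lemma nextEl_spec (σ : List Bool → List Bool → List Bool)
    (hinf : ∀ x : List Bool, (Set.range (σ x)).Infinite) (x : List Bool) :
    nextEl σ hinf x ∈ Set.range (σ x) ∧ x.length < (nextEl σ hinf x).length := by
  have h := (((hinf x).diff (List.finite_length_le Bool x.length)).nonempty).choose_spec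
  refine ⟨h.1, ?_⟩
  have := h.2
  simp only [Set.mem_setOf_eq, not_le] at this
  exact this

/-- The chain `x₀ = [], x_{n+1} = nextEl x_n`. -/
noncomputable def chainEl (σ : List Bool → List Bool → List Bool)
    (hinf : ∀ x : List Bool, (Set.range (σ x)).Infinite) : ℕ → List Bool
  | 0 => []
  | n + 1 => nextEl σ hinf (chainEl σ hinf n)

/-- No total, associative, O(1)-to-one function Σ* × Σ* → Σ* exists:
for every total associative σ and every constant c, some t has more than c
distinct preimage pairs. -/
theorem stmt_1 (σ : List Bool → List Bool → List Bool)
    (hassoc : ∀ x y z : List Bool, σ (σ x y) z = σ x (σ y z)) (c : ℕ) :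
    ∃ t : List Bool, ∃ S : Finset (List Bool × List Bool),
      S.card = c + 1 ∧ ∀ p ∈ S, σ p.1 p.2 = t := by
  by_contra h
  push_neg at h
  -- every fiber of `σ x ·` has at most c elements, hence is finite
  have hfib : ∀ x t : List Bool, {y : List Bool | σ x y = t}.Finite := by
    intro x t
    by_contra hnf
    obtain ⟨T, hT, hcard⟩ := Set.Infinite.exists_subset_card_eq hnf (c + 1)
    obtain ⟨p, hpS, hpt⟩ := h t (T.image fun y => (x, y))
      (by rw [Finset.card_image_of_injective _ (fun a b hab => (Prod.mk.injEq _ _ _ _).mp hab |>.2), hcard])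
    obtain ⟨y, hyT, rfl⟩ := Finset.mem_image.mp hpS
    exact hpt (hT hyT)
  -- hence each range is infinite
  have hinf : ∀ x : List Bool, (Set.range (σ x)).Infinite := by
    intro x
    intro hfin
    have huniv : (Set.univ : Set (List Bool)).Finite := by
      have : (Set.univ : Set (List Bool)) ⊆ ⋃ t ∈ Set.range (σ x), {y | σ x y = t} := by
        intro y _
        exact Set.mem_biUnion ⟨y, rfl⟩ rfl
      exact (hfin.biUnion fun t _ => hfib x t).subset this
    exact Set.infinite_univ huniv
  set x := chainEl σ hinf with hx
  -- strictly increasing lengths ⇒ injective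
  have hmono : StrictMono fun n => (x n).length := by
    apply strictMono_nat_of_lt_succ
    intro n
    exact (nextEl_spec σ hinf (x n)).2
  have hinj : Function.Injective x := fun a b hab => by
    by_contra hne
    rcases lt_or_gt_of_ne hne with hlt | hlt
    · exact absurd (congrArg List.length hab) (ne_of_lt (hmono hlt))
    · exact absurd (congrArg List.length hab) (ne_of_gt (hmono hlt))
  -- x j ∈ range (σ (x i)) for i < j
  have hmem : ∀ i j : ℕ, i < j → x j ∈ Set.range (σ (x i)) := by
    intro i j hij
    induction j with
    | zero => omega
    | succ n ih =>
      rcases Nat.lt_succ_iff_lt_or_eq.mp hij with hlt | rfl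
      · obtain ⟨z, hz⟩ := ih hlt
        obtain ⟨w, hw⟩ := (nextEl_spec σ hinf (x n)).1
        exact ⟨σ z w, by rw [← hassoc, hz, hw]; rfl⟩
      · exact (nextEl_spec σ hinf (x i)).1
  -- build the contradiction
  set t := x (c + 1) with ht
  choose y hy using fun i : ℕ => fun hi : i < c + 1 => hmem i (c + 1) hi
  -- in order to image over Finset.range, use a total function
  classical
  let y' : ℕ → List Bool := fun i => if hi : i < c + 1 then y i hi else []
  obtain ⟨p, hpS, hpt⟩ := h t ((Finset.range (c + 1)).image fun i => (x i, y' i))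
    (by
      rw [Finset.card_image_of_injOn, Finset.card_range]
      intro a _ b _ hab
      exact hinj (Prod.mk.injEq _ _ _ _ |>.mp hab).1)
  obtain ⟨i, hi, rfl⟩ := Finset.mem_image.mp hpS
  have hilt := Finset.mem_range.mp hi
  apply hpt
  show σ (x i) (y' i) = t
  simp only [y', dif_pos hilt]
  exact hy i hilt
end

section
/- For any total, associative function σ : Σ* × Σ* → Σ* and for every natural number k > 0, there exist a natural number k' with k' ≤ k + 1 and strings s₁, …, s_{k'} ∈ Σ* such that the preimage set σ⁻¹(s₁ σ ⋯ σ s_{k'}) contains at least k distinct pairs. -/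
/-- For any total, associative σ and every k > 0, there exist
k' ≤ k + 1 and strings s₁, …, s_{k'} such that σ⁻¹(s₁ σ ⋯ σ s_{k'}) contains at
least k distinct pairs. The k'-fold product is taken as a left fold. -/
theorem stmt_2 (σ : List Bool → List Bool → List Bool)
    (hassoc : ∀ x y z : List Bool, σ (σ x y) z = σ x (σ y z))
    (k : ℕ) (hk : 0 < k) :
    ∃ (k' : ℕ) (s₁ : List Bool) (rest : List (List Bool)),
      k' ≤ k + 1 ∧ rest.length + 1 = k' ∧
      ∃ S : Finset (List Bool × List Bool),
        S.card = k ∧ ∀ p ∈ S, σ p.1 p.2 = rest.foldl σ s₁ := by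
  classical
  by_cases hA : ∃ x t, ∃ Y : Finset (List Bool), Y.card = k ∧ ∀ y ∈ Y, σ x y = t
  · obtain ⟨x, t, Y, hYcard, hY⟩ := hA
    refine ⟨1, t, [], by omega, rfl,
      Y.image (fun y => (x, y)), ?_, ?_⟩
    · rw [Finset.card_image_of_injective _ (by intro a b h; simpa using h)]
      exact hYcard
    · intro p hp
      simp only [Finset.mem_image] at hp
      obtain ⟨y, hy, rfl⟩ := hp
      simpa using hY y hy
  · push_neg at hA
    -- every fiber of σ x · has < k elements, so σ x · escapes any finite set
    have hstep : ∀ x (F : Finset (List Bool)), ∃ y, σ x y ∉ F := by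
      intro x F
      by_contra h
      push_neg at h
      have hfin : ∀ t, {y | σ x y = t}.Finite := by
        intro t
        by_contra hinf
        have hinf' : {y | σ x y = t}.Infinite := hinf
        obtain ⟨Y, hYsub, hYcard⟩ := hinf'.exists_subset_card_eq k
        obtain ⟨y, hyY, hne⟩ := hA x t Y hYcard
        exact hne (hYsub hyY)
      have huniv : (Set.univ : Set (List Bool)).Finite := by
        have hsub : (Set.univ : Set (List Bool)) ⊆ ⋃ t ∈ F, {y | σ x y = t} :=
          fun y _ => Set.mem_biUnion (h y) rfl
        exact (F.finite_toSet.biUnion (fun t _ => hfin t)).subset hsub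
      exact Set.infinite_univ huniv
    -- build a chain of distinct prefix products
    have key : ∀ n : ℕ, ∃ (s₁ : List Bool) (rest : List (List Bool))
        (Q : Finset (List Bool)),
        rest.length = n ∧ Q.card = n ∧ rest.foldl σ s₁ ∉ Q ∧
        ∀ q ∈ Q, ∃ y, σ q y = rest.foldl σ s₁ := by
      intro n
      induction n with
      | zero => exact ⟨[], [], ∅, rfl, rfl, by simp, by simp⟩
      | succ n ih =>
        obtain ⟨s₁, rest, Q, hlen, hcard, hnot, hfac⟩ := ih
        obtain ⟨a, ha⟩ := hstep (rest.foldl σ s₁) (insert (rest.foldl σ s₁) Q)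
        refine ⟨s₁, rest ++ [a], insert (rest.foldl σ s₁) Q, by simp [hlen], ?_, ?_, ?_⟩
        · rw [Finset.card_insert_of_notMem hnot, hcard]
        · simpa [List.foldl_append] using ha
        · intro q hq
          rw [Finset.mem_insert] at hq
          rcases hq with rfl | hq
          · exact ⟨a, by simp [List.foldl_append]⟩
          · obtain ⟨y, hy⟩ := hfac q hq
            exact ⟨σ y a, by rw [← hassoc, hy]; simp [List.foldl_append]⟩
    obtain ⟨s₁, rest, Q, hlen, hcard, _, hfac⟩ := key k
    choose g hg using hfac
    refine ⟨k + 1, s₁, rest, le_refl _, by omega, Q.attach.image (fun q => (q.1, g q.1 q.2)), ?_, ?_⟩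
    · rw [Finset.card_image_of_injOn, Finset.card_attach, hcard]
      intro a _ b _ hab
      exact Subtype.ext (congrArg Prod.fst hab)
    · intro p hp
      simp only [Finset.mem_image] at hp
      obtain ⟨q, _, rfl⟩ := hp
      exact hg q.1 q.2
end

section
/- For every nondecreasing, unbounded, total, computable function g : ℕ → ℕ, there exists a g(n)-to-one, total, commutative, associative, computable function σ : Σ* × Σ* → Σ*. That is, there is a computable σ : Σ* × Σ* → Σ* such that: (i) (x σ y) σ z = x σ (y σ z) for all x, y, z; (ii) x σ y = y σ x for all x, y; and (iii) for every y ∈ Σ* in the image of σ, the set {(x₁,x₂) ∈ Σ* × Σ* | σ(x₁,x₂) = y} is finite and has at most g(|y|) elements. -/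
/-!
Transport addition on `ℕ` to strings: with an injection `code : ℕ → Σ*` and a left inverse
`weight` of it, put `x σ y = code (weight x + weight y)`. Associativity and commutativity come
from `(ℕ, +)`, and `σ x y = code n` exactly when `weight x + weight y = n`. If each weight is
taken by at most two strings, there are at most `4 (n + 1)` such pairs, so it suffices to pad
`code n` until `g (|code n|) ≥ 4 (n + 1)`, which is possible since `g` is unbounded and
monotone. With `code n = 1ⁿ 0ᵖ`, taking `weight x` to be the number `m` of `true`s in `x`
when `x = code m`, and the encoding of `x` otherwise, keeps everything computable and each
weight hit at most twice.
-/

theorem Primrec.list_replicate {α : Type*} [Primcodable α] :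
    Primrec₂ (List.replicate : ℕ → α → List α) :=
  (Primrec.list_map (Primrec.list_range.comp Primrec.fst) (Primrec.snd.comp Primrec.fst).to₂).of_eq
    fun p => by simp [List.map_const']

theorem Primrec.list_count {α : Type*} [Primcodable α] [DecidableEq α] (a : α) :
    Primrec (List.count a) :=
  (Primrec.list_length.comp (Primrec.listFilter (p := (· = a))
    (Primrec.eq.comp Primrec.id (Primrec.const a)))).of_eq
    fun l => by simp [List.count_eq_length_filter]; rfl

namespace FiniteToOne

section AddVia

open Finset

variable {α : Type*} {F : ℕ → α} {w : α → ℕ}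

def addVia (F : ℕ → α) (w : α → ℕ) (x y : α) : α := F (w x + w y)

theorem addVia_assoc (h : Function.LeftInverse w F) (x y z : α) :
    addVia F w (addVia F w x y) z = addVia F w x (addVia F w y z) := by
  simp only [addVia, h _, Nat.add_assoc]

theorem addVia_comm (x y : α) : addVia F w x y = addVia F w y x := by
  simp only [addVia, Nat.add_comm]

theorem addVia_eq_iff (h : Function.LeftInverse w F) {x y : α} {n : ℕ} :
    addVia F w x y = F n ↔ w x + w y = n :=
  h.injective.eq_iff

theorem finite_and_ncard_addVia_fiber_le (h : Function.LeftInverse w F) (c : ℕ → Finset α)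
    {k : ℕ} (hc : ∀ x, x ∈ c (w x)) (hk : ∀ a, (c a).card ≤ k) (n : ℕ) :
    {p : α × α | addVia F w p.1 p.2 = F n}.Finite ∧
      {p : α × α | addVia F w p.1 p.2 = F n}.ncard ≤ (n + 1) * k ^ 2 := by
  classical
  set T := (antidiagonal n).biUnion fun ab => c ab.1 ×ˢ c ab.2
  have hsub : {p : α × α | addVia F w p.1 p.2 = F n} ⊆ T := fun p hp => by
    rw [Set.mem_ofPred_eq, addVia_eq_iff h] at hp
    exact mem_biUnion.2 ⟨(w p.1, w p.2), mem_antidiagonal.2 hp, mem_product.2 ⟨hc _, hc _⟩⟩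
  have hT : #T ≤ (n + 1) * k ^ 2 := calc
    #T ≤ ∑ ab ∈ antidiagonal n, #(c ab.1 ×ˢ c ab.2) := card_biUnion_le
    _ ≤ ∑ _ab ∈ antidiagonal n, k ^ 2 := sum_le_sum fun ab _ => by
        rw [card_product, sq]; exact Nat.mul_le_mul (hk _) (hk _)
    _ = (n + 1) * k ^ 2 := by rw [sum_const, Nat.card_antidiagonal, smul_eq_mul]
  exact ⟨T.finite_toSet.subset hsub,
    (Set.ncard_le_ncard hsub T.finite_toSet).trans ((Set.ncard_coe_finset T).trans_le hT)⟩

end AddVia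

section Construction

variable (g : ℕ → ℕ) (hunb : ∀ N : ℕ, ∃ n : ℕ, g n > N)

def padLength (n : ℕ) : ℕ := Nat.find (hunb (4 * n + 3))

theorem padLength_spec (n : ℕ) : 4 * n + 3 < g (padLength g hunb n) :=
  Nat.find_spec (hunb (4 * n + 3))

def code (n : ℕ) : List Bool :=
  List.replicate n true ++ List.replicate (padLength g hunb n) false

theorem count_code (n : ℕ) : (code g hunb n).count true = n := by
  simp [code, List.count_replicate]

theorem padLength_le_length_code (n : ℕ) : padLength g hunb n ≤ (code g hunb n).length := by
  simp [code]

def weight (x : List Bool) : ℕ :=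
  if x = code g hunb (x.count true) then x.count true else Encodable.encode x

theorem weight_code : Function.LeftInverse (weight g hunb) (code g hunb) := fun n => by
  simp [weight, count_code]

def weightCover (a : ℕ) : Finset (List Bool) :=
  insert (code g hunb a) (Encodable.decode a).toFinset

theorem mem_weightCover_weight (x : List Bool) : x ∈ weightCover g hunb (weight g hunb x) := by
  unfold weight
  split_ifs with h
  · exact Finset.mem_insert.2 (Or.inl h)
  · exact Finset.mem_insert_of_mem (by simp)

theorem card_weightCover_le (a : ℕ) : (weightCover g hunb a).card ≤ 2 :=
  (Finset.card_insert_le _ _).trans (by cases Encodable.decode (α := List Bool) a <;> simp)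

variable {g}

theorem computable_padLength (hcomp : Computable g) : Computable (padLength g hunb) :=
  Computable.find (Primrec.nat_lt.decide.to_comp.comp
    (Primrec.nat_add.comp (Primrec.nat_mul.comp (Primrec.const 4) Primrec.fst)
      (Primrec.const 3)).to_comp (hcomp.comp Computable.snd)).computablePred _

theorem computable_code (hcomp : Computable g) : Computable (code g hunb) :=
  Computable.list_append.comp
    (Primrec.list_replicate.to_comp.comp Computable.id (Computable.const true))
    (Primrec.list_replicate.to_comp.comp (computable_padLength hunb hcomp) (Computable.const false))

theorem computable_weight (hcomp : Computable g) : Computable (weight g hunb) := by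
  have hcount : Computable (List.count true) := (Primrec.list_count true).to_comp
  exact (Computable.cond (Primrec.eq.decide.to_comp.comp Computable.id
    ((computable_code hunb hcomp).comp hcount)) hcount Computable.encode).of_eq
    fun x => by simp only [weight, id, Bool.cond_decide]

theorem computable_addVia_code_weight (hcomp : Computable g) :
    Computable₂ (addVia (code g hunb) (weight g hunb)) :=
  (computable_code hunb hcomp).comp (Primrec.nat_add.to_comp.comp
    ((computable_weight hunb hcomp).comp Computable.fst)
    ((computable_weight hunb hcomp).comp Computable.snd))

end Construction

end FiniteToOne

open FiniteToOne

/-- For every nondecreasing, unbounded, total, computable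
g : ℕ → ℕ, there is a g(n)-to-one, total, commutative, associative, computable
function σ : Σ* × Σ* → Σ*. -/
theorem stmt_3 (g : ℕ → ℕ) (hmono : Monotone g)
    (hunb : ∀ N : ℕ, ∃ n : ℕ, g n > N) (hcomp : Computable g) :
    ∃ σ : List Bool → List Bool → List Bool,
      Computable₂ σ ∧
      (∀ x y z : List Bool, σ (σ x y) z = σ x (σ y z)) ∧
      (∀ x y : List Bool, σ x y = σ y x) ∧
      (∀ y : List Bool, (∃ x₁ x₂ : List Bool, σ x₁ x₂ = y) →
        {p : List Bool × List Bool | σ p.1 p.2 = y}.Finite ∧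
        {p : List Bool × List Bool | σ p.1 p.2 = y}.ncard ≤ g y.length) := by
  refine ⟨addVia (code g hunb) (weight g hunb), computable_addVia_code_weight hunb hcomp,
    addVia_assoc (weight_code g hunb), addVia_comm, ?_⟩
  rintro _ ⟨x₁, x₂, rfl⟩
  set n := weight g hunb x₁ + weight g hunb x₂
  obtain ⟨hfin, hcard⟩ := finite_and_ncard_addVia_fiber_le (weight_code g hunb)
    (weightCover g hunb) (mem_weightCover_weight g hunb) (card_weightCover_le g hunb) n
  refine ⟨hfin, hcard.trans ?_⟩
  calc (n + 1) * 2 ^ 2 ≤ g (padLength g hunb n) := by linarith [padLength_spec g hunb n]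
    _ ≤ g (code g hunb n).length := hmono (padLength_le_length_code g hunb n)
end

section
/- Suppose σ : Σ* × Σ* → Σ* is a total, associative function. For every natural number k ≥ 1, there exist a natural number k' with k' ≤ k + 1 and strings s₁, …, s_{k'} ∈ Σ* such that, writing t = s₁ σ ⋯ σ s_{k'}: (1) at least one of the following holds: (a) there exist at least k distinct strings x ≠ t with σ(x,y) = t for some y, or (b) there exist at least k distinct strings y ≠ t with σ(x,y) = t for some x; and (2) 2 ≤ max{|s₁|, …, |s_{k'}|} ≤ ⌈2 log₂(k + 1)⌉. -/
/-!
Let `A` be the set of strings of length `L = ⌈2 log₂ (k + 1)⌉ = clog₂ ((k + 1)²)`, so that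
`|A| ≥ (k + 1)² > k²`. Greedily extend a chain `s₁, s₂, …` of elements of `A` keeping its prefix
products `s₁ σ ⋯ σ sᵢ` pairwise distinct. If the chain reaches `k + 1` factors, associativity makes
every earlier prefix product a left factor of the last one: `k` distinct left factors. Otherwise the
chain gets stuck with a set `P` of at most `k` prefix products and current product `c` such that
`c σ a ∈ P` for every `a ∈ A`; by pigeonhole some `t ∈ P` is hit by more than `k` elements `a`, which
are `k` distinct right factors of `t`, and `t` is itself the product of a prefix of the chain.
-/

def HasManyLeftFactors {α : Type*} (f : α → α → α) (k : ℕ) (t : α) : Prop :=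
  ∃ S : Finset α, S.card = k ∧ ∀ x ∈ S, x ≠ t ∧ ∃ y, f x y = t

def HasManyRightFactors {α : Type*} (f : α → α → α) (k : ℕ) (t : α) : Prop :=
  ∃ S : Finset α, S.card = k ∧ ∀ y ∈ S, y ≠ t ∧ ∃ x, f x y = t

namespace List

variable {α : Type*} (f : α → α → α)

theorem eq_foldl_or_exists_eq_foldl_of_mem_scanl [Std.Associative f] {l : List α} {b p : α}
    (hp : p ∈ l.scanl f b) : p = l.foldl f b ∨ ∃ y, f p y = l.foldl f b := by
  induction l generalizing b with
  | nil => simp_all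
  | cons a l ih =>
    rw [scanl_cons, mem_cons] at hp
    rcases hp with rfl | hp
    · exact Or.inr ⟨l.foldl f a, foldl_assoc.symm⟩
    · simpa using ih hp

theorem exists_eq_foldl_take_of_mem_scanl {l : List α} {b p : α} (hp : p ∈ l.scanl f b) :
    ∃ i, p = (l.take i).foldl f b := by
  obtain ⟨i, hi, rfl⟩ := mem_iff_getElem.mp hp
  exact ⟨i, getElem_scanl hi⟩

theorem nodup_scanl_append_singleton {l : List α} {b a : α} (hl : (l.scanl f b).Nodup)
    (ha : f (l.foldl f b) a ∉ l.scanl f b) : ((l ++ [a]).scanl f b).Nodup := by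
  rw [scanl_append, scanl_singleton, tail_cons, ← concat_eq_append]
  exact hl.concat ha

theorem hasManyLeftFactors_foldl_of_nodup_scanl [Std.Associative f] [DecidableEq α]
    {l : List α} {b : α} (hl : (l.scanl f b).Nodup) :
    HasManyLeftFactors f l.length (l.foldl f b) := by
  have hmem : l.foldl f b ∈ l.scanl f b := mem_of_getLast? getLast?_scanl
  refine ⟨(l.scanl f b).toFinset.erase (l.foldl f b), ?_, fun x hx => ?_⟩
  · rw [Finset.card_erase_of_mem (mem_toFinset.mpr hmem), toFinset_card_of_nodup hl,
      length_scanl, Nat.add_sub_cancel]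
  · obtain ⟨hne, hx⟩ := Finset.mem_erase.mp hx
    exact ⟨hne, (eq_foldl_or_exists_eq_foldl_of_mem_scanl f (mem_toFinset.mp hx)).resolve_left hne⟩

end List

theorem Finset.exists_hasManyRightFactors_of_mapsTo {α : Type*} [DecidableEq α] (f : α → α → α)
    {A P : Finset α} {c : α} {k : ℕ} (hmaps : ∀ a ∈ A, f c a ∈ P) (hcard : P.card * k < A.card) :
    ∃ t ∈ P, HasManyRightFactors f k t := by
  obtain ⟨t, htP, hfiber⟩ := exists_lt_card_fiber_of_mul_lt_card_of_maps_to hmaps hcard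
  have hk : k ≤ ({a ∈ A | f c a = t}.erase t).card := by
    have := pred_card_le_card_erase (s := {a ∈ A | f c a = t}) (a := t)
    omega
  obtain ⟨S, hSsub, hScard⟩ := exists_subset_card_eq hk
  refine ⟨t, htP, S, hScard, fun y hy => ?_⟩
  obtain ⟨hne, hy⟩ := mem_erase.mp (hSsub hy)
  exact ⟨hne, c, (mem_filter.mp hy).2⟩

theorem Finset.exists_foldl_hasManyLeftFactors_or_hasManyRightFactors {α : Type*}
    [DecidableEq α] (f : α → α → α) [Std.Associative f] {A : Finset α} {k : ℕ} (hA : k * k < A.card) :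
    ∃ (b : α) (l : List α), b ∈ A ∧ (∀ a ∈ l, a ∈ A) ∧ l.length ≤ k ∧
      (HasManyLeftFactors f k (l.foldl f b) ∨ HasManyRightFactors f k (l.foldl f b)) := by
  by_contra hnot
  suffices ∀ n ≤ k, ∃ (b : α) (l : List α),
      b ∈ A ∧ (∀ a ∈ l, a ∈ A) ∧ l.length = n ∧ (l.scanl f b).Nodup by
    obtain ⟨b, l, hb, hl, rfl, hnodup⟩ := this k le_rfl
    exact hnot ⟨b, l, hb, hl, le_rfl,
      Or.inl (List.hasManyLeftFactors_foldl_of_nodup_scanl f hnodup)⟩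
  intro n hn
  induction n with
  | zero =>
    obtain ⟨b, hb⟩ : A.Nonempty := card_pos.mp (by omega)
    exact ⟨b, [], hb, by simp, rfl, by simp⟩
  | succ n ih =>
    obtain ⟨b, l, hb, hl, hlen, hnodup⟩ := ih (by omega)
    by_cases hclosed : ∀ a ∈ A, f (l.foldl f b) a ∈ l.scanl f b
    · have hcard : (l.scanl f b).toFinset.card * k < A.card :=
        calc _ ≤ k * k := by
              gcongr
              exact (List.toFinset_card_le _).trans (by rw [List.length_scanl]; omega)
          _ < A.card := hA
      obtain ⟨t, ht, hright⟩ := exists_hasManyRightFactors_of_mapsTo f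
        (fun a ha => List.mem_toFinset.mpr (hclosed a ha)) hcard
      obtain ⟨i, rfl⟩ := List.exists_eq_foldl_take_of_mem_scanl f (List.mem_toFinset.mp ht)
      exact (hnot ⟨b, l.take i, hb, fun a ha => hl a (List.mem_of_mem_take ha),
        (List.length_take_le' i l).trans (by omega), Or.inr hright⟩).elim
    · obtain ⟨a, ha, hnew⟩ := not_forall₂.mp hclosed
      refine ⟨b, l ++ [a], hb, ?_, by simp [hlen], List.nodup_scanl_append_singleton f hnodup hnew⟩
      simpa [or_imp, forall_and] using And.intro hl ha

theorem Nat.ceil_two_mul_logb_two_eq_clog (n : ℕ) :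
    ⌈2 * Real.logb 2 n⌉₊ = Nat.clog 2 (n ^ 2) := by
  have := Real.natCeil_logb_natCast 2 (n ^ 2)
  push_cast at this
  rwa [Real.logb_pow] at this

theorem List.foldl_max_eq_of_forall_eq {α : Type*} [LinearOrder α] {l : List α} {a : α}
    (h : ∀ x ∈ l, x = a) : l.foldl max a = a := by
  induction l with
  | nil => rfl
  | cons x l ih => simp_all

theorem exists_finset_list_length_eq (α : Type*) [Fintype α] (n : ℕ) :
    ∃ A : Finset (List α), A.card = Fintype.card α ^ n ∧ ∀ a ∈ A, a.length = n :=
  ⟨(Finset.univ : Finset (List.Vector α n)).map ⟨List.Vector.toList, List.Vector.toList_injective⟩,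
    by simp, by simp⟩

/-- For total associative σ and every k ≥ 1, there exist
k' ≤ k + 1 and strings s₁, …, s_{k'}, with t = s₁ σ ⋯ σ s_{k'} (left fold),
such that (1) at least k distinct strings x ≠ t (resp. y ≠ t) appear as left
(resp. right) arguments of preimages of t, and
(2) 2 ≤ max{|s₁|, …, |s_{k'}|} ≤ ⌈2 log₂(k + 1)⌉. -/
theorem stmt_4 (σ : List Bool → List Bool → List Bool)
    (hassoc : ∀ x y z : List Bool, σ (σ x y) z = σ x (σ y z))
    (k : ℕ) (hk : 1 ≤ k) :
    ∃ (k' : ℕ) (s₁ : List Bool) (rest : List (List Bool)),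
      k' ≤ k + 1 ∧ rest.length + 1 = k' ∧
      ((∃ S : Finset (List Bool), S.card = k ∧
          ∀ x ∈ S, x ≠ rest.foldl σ s₁ ∧ ∃ y : List Bool, σ x y = rest.foldl σ s₁) ∨
       (∃ S : Finset (List Bool), S.card = k ∧
          ∀ y ∈ S, y ≠ rest.foldl σ s₁ ∧ ∃ x : List Bool, σ x y = rest.foldl σ s₁)) ∧
      2 ≤ (rest.map List.length).foldl max s₁.length ∧
      (rest.map List.length).foldl max s₁.length ≤ ⌈2 * Real.logb 2 (k + 1)⌉₊ := by
  have : Std.Associative σ := ⟨hassoc⟩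
  set L := Nat.clog 2 ((k + 1) ^ 2)
  have hL : ⌈2 * Real.logb 2 ((k : ℝ) + 1)⌉₊ = L := by
    exact_mod_cast Nat.ceil_two_mul_logb_two_eq_clog (k + 1)
  obtain ⟨A, hAcard, hAlen⟩ := exists_finset_list_length_eq Bool L
  have hkA : k * k < A.card := by
    rw [hAcard, Fintype.card_bool]
    exact (by nlinarith : k * k < (k + 1) ^ 2).trans_le (Nat.le_pow_clog one_lt_two _)
  obtain ⟨s₁, rest, hs₁, hrest, hlen, hfactors⟩ :=
    A.exists_foldl_hasManyLeftFactors_or_hasManyRightFactors σ hkA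
  have hmax : (rest.map List.length).foldl max s₁.length = L := by
    rw [hAlen s₁ hs₁]
    exact List.foldl_max_eq_of_forall_eq (by simpa using fun r hr => hAlen r (hrest r hr))
  refine ⟨rest.length + 1, s₁, rest, by omega, rfl, hfactors, ?_, by rw [hmax, hL]⟩
  rw [hmax]
  exact (Nat.lt_clog_iff_pow_lt one_lt_two).2 (by nlinarith : 2 ^ 1 < (k + 1) ^ 2)
end

section
/- Suppose σ : Σ* × Σ* → Σ* is a total, associative function. For every natural number k ≥ 1, there exist a natural number k' with k' ≤ k + 1 and strings s₁, …, s_{k'} ∈ Σ* such that: (1) the preimage set σ⁻¹(s₁ σ ⋯ σ s_{k'}) contains at least k distinct pairs; and (2) 2 ≤ max{|s₁|, …, |s_{k'}|} ≤ ⌈2 log₂(k + 1)⌉. -/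
/-!
Work in the semigroup `(Σ*, σ)` with `A` the set of all strings of length
`L = ⌈2 log₂(k + 1)⌉`, so that `#A = 2^L ≥ (k + 1)^2 > k^2`. Starting from any `a ∈ A`, grow a word
`a l₁ ⋯ lₙ` over `A` whose prefix products are pairwise distinct. With `p` the current product,
either `s ↦ p * s` takes at most `k` values on `A`, and then by pigeonhole more than `k` letters `s`
give the same product `p * s`, i.e. `k` factorizations `(p, s)`; or it takes more than `k` values,
one of which is a new prefix product. After `k` steps the `k` proper prefix products are `k`
distinct left factors of the whole product.
-/

open Finset

theorem List.foldl_max_of_forall_le {β : Type*} [LinearOrder β] {a : β} :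
    ∀ {l : List β}, (∀ b ∈ l, b ≤ a) → l.foldl max a = a
  | [], _ => rfl
  | b :: l, h => by
    rw [List.foldl_cons, max_eq_left (h b List.mem_cons_self)]
    exact List.foldl_max_of_forall_le fun c hc => h c (List.mem_cons_of_mem b hc)

section Semigroup

variable {α : Type*} [Semigroup α]

theorem dvd_foldl_mul_cons (x b : α) (l : List α) : x ∣ (b :: l).foldl (· * ·) x :=
  ⟨l.foldl (· * ·) b, List.foldl_assoc⟩

theorem foldl_mul_dvd_of_isPrefix {a : α} {m l : List α} (hm : m <+: l) (hne : m ≠ l) :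
    m.foldl (· * ·) a ∣ l.foldl (· * ·) a := by
  obtain ⟨r, rfl⟩ := hm
  obtain ⟨b, r, rfl⟩ := List.exists_cons_of_ne_nil (by simpa using hne)
  rw [List.foldl_append]
  exact dvd_foldl_mul_cons _ _ _

def HasFactorizations (t : α) (k : ℕ) : Prop :=
  ∃ S : Finset (α × α), k ≤ #S ∧ ∀ p ∈ S, p.1 * p.2 = t

theorem HasFactorizations.exists_card_eq {t : α} {k : ℕ} (h : HasFactorizations t k) :
    ∃ S : Finset (α × α), #S = k ∧ ∀ p ∈ S, p.1 * p.2 = t := by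
  obtain ⟨S, hkS, hS⟩ := h
  obtain ⟨T, hTS, hT⟩ := exists_subset_card_eq hkS
  exact ⟨T, hT, fun p hp => hS p (hTS hp)⟩

theorem HasFactorizations.mono {t : α} {k m : ℕ} (h : HasFactorizations t m) (hkm : k ≤ m) :
    HasFactorizations t k :=
  let ⟨S, hmS, hS⟩ := h
  ⟨S, hkm.trans hmS, hS⟩

theorem hasFactorizations_of_forall_dvd {t : α} {X : Finset α} (hX : ∀ x ∈ X, x ∣ t) :
    HasFactorizations t #X := by
  choose! y hy using hX
  refine ⟨X.map ⟨fun x => (x, y x), fun x x' h => (Prod.ext_iff.mp h).1⟩, (card_map _).ge, ?_⟩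
  simp only [mem_map]
  rintro _ ⟨x, hx, rfl⟩
  exact (hy x hx).symm

theorem hasFactorizations_of_forall_mul_eq {t x : α} {Y : Finset α} (hY : ∀ y ∈ Y, x * y = t) :
    HasFactorizations t #Y := by
  refine ⟨Y.map ⟨(x, ·), fun y y' h => (Prod.ext_iff.mp h).2⟩, (card_map _).ge, ?_⟩
  simp only [mem_map]
  rintro _ ⟨y, hy, rfl⟩
  exact hY y hy

section DecidableEq

variable [DecidableEq α]

def prefixProducts (a : α) (l : List α) : Finset α :=
  (l.inits.map (List.foldl (· * ·) a)).toFinset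

theorem prefixProducts_concat (a b : α) (l : List α) :
    prefixProducts a (l ++ [b]) = insert ((l ++ [b]).foldl (· * ·) a) (prefixProducts a l) := by
  simp [prefixProducts, List.inits_append]

theorem hasFactorizations_prefixProducts (a : α) (l : List α) :
    HasFactorizations (l.foldl (· * ·) a) (#(prefixProducts a l) - 1) := by
  have hmem : l.foldl (· * ·) a ∈ prefixProducts a l := by
    simp only [prefixProducts, List.mem_toFinset, List.mem_map, List.mem_inits]
    exact ⟨l, List.prefix_refl l, rfl⟩
  rw [← card_erase_of_mem hmem]
  refine hasFactorizations_of_forall_dvd fun x hx => ?_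
  obtain ⟨hxt, hx⟩ := mem_erase.mp hx
  simp only [prefixProducts, List.mem_toFinset, List.mem_map, List.mem_inits] at hx
  obtain ⟨m, hm, rfl⟩ := hx
  exact foldl_mul_dvd_of_isPrefix hm (by rintro rfl; exact hxt rfl)

theorem exists_hasFactorizations_or_card_prefixProducts {A : Finset α} {k : ℕ} (hA : k * k < #A)
    (a : α) :
    ∀ n ≤ k, (∃ l : List α, (∀ s ∈ l, s ∈ A) ∧ l.length ≤ k ∧
        HasFactorizations (l.foldl (· * ·) a) k) ∨
      ∃ l : List α, (∀ s ∈ l, s ∈ A) ∧ l.length = n ∧ #(prefixProducts a l) = n + 1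
  | 0, _ => Or.inr ⟨[], by simp, rfl, by simp [prefixProducts]⟩
  | n + 1, hn => by
    obtain done | ⟨l, hlA, rfl, hl⟩ :=
      exists_hasFactorizations_or_card_prefixProducts hA a n (by omega)
    · exact Or.inl done
    set p := l.foldl (· * ·) a
    have hlA' {s : α} (hs : s ∈ A) : ∀ t ∈ l ++ [s], t ∈ A := by
      simpa [or_imp, forall_and] using ⟨hlA, hs⟩
    by_cases himg : #(A.image (p * ·)) ≤ k
    · obtain ⟨_, ht, hkt⟩ := exists_lt_card_fiber_of_mul_lt_card_of_maps_to
        (fun s hs => mem_image_of_mem (p * ·) hs) ((Nat.mul_le_mul_right k himg).trans_lt hA)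
      obtain ⟨s, hs, rfl⟩ := mem_image.mp ht
      refine Or.inl ⟨l ++ [s], hlA' hs, by simp; omega, ?_⟩
      rw [List.foldl_concat]
      exact (hasFactorizations_of_forall_mul_eq fun y hy => (mem_filter.mp hy).2).mono hkt.le
    · have hnew : ¬A.image (p * ·) ⊆ prefixProducts a l := fun h => by
        have := card_le_card h
        omega
      obtain ⟨_, hy, hyP⟩ := not_subset.mp hnew
      obtain ⟨s, hs, rfl⟩ := mem_image.mp hy
      refine Or.inr ⟨l ++ [s], hlA' hs, by simp, ?_⟩
      rw [prefixProducts_concat, card_insert_of_notMem (by rwa [List.foldl_concat]), hl]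

end DecidableEq

theorem exists_hasFactorizations {A : Finset α} {k : ℕ} (hA : k * k < #A) (a : α) :
    ∃ l : List α, (∀ s ∈ l, s ∈ A) ∧ l.length ≤ k ∧ HasFactorizations (l.foldl (· * ·) a) k := by
  classical
  obtain done | ⟨l, hlA, hlen, hl⟩ := exists_hasFactorizations_or_card_prefixProducts hA a k le_rfl
  · exact done
  · exact ⟨l, hlA, hlen.le, by simpa [hl] using hasFactorizations_prefixProducts a l⟩

end Semigroup

theorem add_one_sq_le_two_pow_ceil_logb (k : ℕ) :
    (k + 1) ^ 2 ≤ 2 ^ ⌈2 * Real.logb 2 (k + 1)⌉₊ := by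
  have hlog : Real.logb 2 (((k : ℝ) + 1) ^ 2) ≤ ⌈2 * Real.logb 2 (k + 1)⌉₊ := by
    rw [Real.logb_pow]
    exact_mod_cast Nat.le_ceil _
  rw [Real.logb_le_iff_le_rpow one_lt_two (by positivity), Real.rpow_natCast] at hlog
  exact_mod_cast hlog

/-- For total associative σ and every k ≥ 1, there exist
k' ≤ k + 1 and strings s₁, …, s_{k'} such that (1) σ⁻¹(s₁ σ ⋯ σ s_{k'}) contains
at least k distinct pairs, and (2) 2 ≤ max{|s₁|, …, |s_{k'}|} ≤ ⌈2 log₂(k + 1)⌉. -/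
theorem stmt_5 (σ : List Bool → List Bool → List Bool)
    (hassoc : ∀ x y z : List Bool, σ (σ x y) z = σ x (σ y z))
    (k : ℕ) (hk : 1 ≤ k) :
    ∃ (k' : ℕ) (s₁ : List Bool) (rest : List (List Bool)),
      k' ≤ k + 1 ∧ rest.length + 1 = k' ∧
      (∃ S : Finset (List Bool × List Bool),
        S.card = k ∧ ∀ p ∈ S, σ p.1 p.2 = rest.foldl σ s₁) ∧
      2 ≤ (rest.map List.length).foldl max s₁.length ∧
      (rest.map List.length).foldl max s₁.length ≤ ⌈2 * Real.logb 2 (k + 1)⌉₊ := by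
  let _ : Semigroup (List Bool) := { mul := σ, mul_assoc := hassoc }
  set L := ⌈2 * Real.logb 2 (k + 1)⌉₊
  have hpow : (k + 1) ^ 2 ≤ 2 ^ L := add_one_sq_le_two_pow_ceil_logb k
  have hL : 2 ≤ L := (Nat.pow_le_pow_iff_right one_lt_two).mp <|
    (Nat.pow_le_pow_left (by omega) 2).trans hpow
  let A : Finset (List Bool) := univ.map ⟨List.ofFn (n := L), List.ofFn_injective⟩
  have hA : k * k < #A := by
    simp only [A, card_map, card_univ, Fintype.card_fun, Fintype.card_bool, Fintype.card_fin]
    nlinarith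
  obtain ⟨a, ha⟩ : A.Nonempty := card_pos.mp (by omega)
  obtain ⟨l, hlA, hlen, hfac⟩ := exists_hasFactorizations hA a
  obtain ⟨S, hS, hSt⟩ := hfac.exists_card_eq
  have hlength {s : List Bool} (hs : s ∈ A) : s.length = L := by
    obtain ⟨f, -, rfl⟩ := mem_map.mp hs
    exact List.length_ofFn
  have hmax : (l.map List.length).foldl max a.length = L := by
    rw [hlength ha]
    refine List.foldl_max_of_forall_le ?_
    simp only [List.mem_map]
    rintro _ ⟨s, hs, rfl⟩
    exact (hlength (hlA s hs)).le
  exact ⟨l.length + 1, a, l, by omega, rfl, ⟨S, hS, hSt⟩, hmax ▸ hL, hmax.le⟩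
end

section
/- Let σ : Σ* × Σ* → Σ* be a total, associative function that has polynomially bounded outputs, i.e., there exists a polynomial p with natural-number coefficients such that |s₁ σ s₂| < p(max{|s₁|, |s₂|}) for all s₁, s₂ ∈ Σ*. Then there exists a natural number j > 1 such that for every natural number k > 1 and all strings s₁, …, s_k ∈ Σ*, |s₁ σ ⋯ σ s_k| < (max{2, |s₁|, …, |s_k|})^(j^⌈log₂ k⌉). -/
/-!
A polynomial `p` with natural coefficients satisfies `p n < n ^ j` for all `n ≥ 2` once `j` is
large, so a product of two elements of size at most `M ≥ 2` has size below `M ^ j`. By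
associativity a product of at most `2 ^ n` factors splits into two products of at most `2 ^ (n-1)`
factors each, and induction on `n` bounds it by `N ^ (j ^ n)`, where `N ≥ 2` bounds the factors.
-/

namespace Polynomial

theorem eval_nat_mono (p : ℕ[X]) : Monotone fun n : ℕ => p.eval n := fun a b hab => by
  simp only [eval_eq_sum_range]
  exact Finset.sum_le_sum fun i _ => Nat.mul_le_mul_left _ (Nat.pow_le_pow_left hab i)

theorem eval_nat_lt_pow (p : ℕ[X]) {n : ℕ} (hn : 2 ≤ n) :
    p.eval n < n ^ (p.eval 1 + p.natDegree) := by
  have hcoeff : p.eval n ≤ p.eval 1 * n ^ p.natDegree := by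
    rw [eval_eq_sum_range, eval_eq_sum_range, Finset.sum_mul]
    refine Finset.sum_le_sum fun i hi => ?_
    rw [one_pow, mul_one]
    exact Nat.mul_le_mul_left _
      (Nat.pow_le_pow_right (by omega) (Nat.lt_succ_iff.mp (Finset.mem_range.mp hi)))
  calc p.eval n ≤ p.eval 1 * n ^ p.natDegree := hcoeff
    _ < n ^ p.eval 1 * n ^ p.natDegree :=
        Nat.mul_lt_mul_of_lt_of_le (Nat.lt_pow_self (by omega)) le_rfl (by positivity)
    _ = n ^ (p.eval 1 + p.natDegree) := (pow_add _ _ _).symm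

end Polynomial

theorem List.foldl_append_cons {α : Type*} (op : α → α → α) [Std.Associative op]
    (a b : α) (l₁ l₂ : List α) :
    (l₁ ++ b :: l₂).foldl op a = op (l₁.foldl op a) (l₂.foldl op b) := by
  rw [List.foldl_append, List.foldl_cons, List.foldl_assoc]

section PowBound

variable {α : Type*} (size : α → ℕ) (σ : α → α → α)

def HasPowBound (j : ℕ) : Prop :=
  ∀ M, 2 ≤ M → ∀ x y, size x ≤ M → size y ≤ M → size (σ x y) < M ^ j

variable {size σ}

theorem hasPowBound_of_lt_eval {p : Polynomial ℕ}
    (hp : ∀ x y, size (σ x y) < p.eval (max (size x) (size y)))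
    {j : ℕ} (hj : p.eval 1 + p.natDegree ≤ j) : HasPowBound size σ j :=
  fun M hM x y hx hy =>
    calc size (σ x y) < p.eval (max (size x) (size y)) := hp x y
      _ ≤ p.eval M := p.eval_nat_mono (max_le hx hy)
      _ < M ^ (p.eval 1 + p.natDegree) := p.eval_nat_lt_pow hM
      _ ≤ M ^ j := Nat.pow_le_pow_right (by omega) hj

variable [Std.Associative σ] {j : ℕ}

/-- Here `l.length < m` says that `a :: l` has at most `m` factors. -/
theorem HasPowBound.size_foldl_lt_of_length_lt_two_mul (hσ : HasPowBound size σ j) (hj : 1 < j)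
    {m N M : ℕ} (hM : 2 ≤ M)
    (H : ∀ (a : α) (l : List α), l.length < m → size a ≤ N → (∀ x ∈ l, size x ≤ N) →
      size (l.foldl σ a) ≤ M)
    {a : α} {l : List α} (hl : l.length < 2 * m) (ha : size a ≤ N)
    (hlN : ∀ x ∈ l, size x ≤ N) : size (l.foldl σ a) < M ^ j := by
  by_cases hshort : l.length < m
  · calc size (l.foldl σ a) ≤ M := H a l hshort ha hlN
      _ = M ^ 1 := (pow_one M).symm
      _ < M ^ j := Nat.pow_lt_pow_right (by omega) hj
  have hsplit := List.drop_eq_getElem_cons (i := m - 1) (l := l) (by omega)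
  set b := l[m - 1]
  have hl_eq : l = l.take (m - 1) ++ b :: l.drop (m - 1 + 1) := by
    rw [← hsplit, List.take_append_drop]
  have hleft := H a (l.take (m - 1)) (by rw [List.length_take]; omega) ha
    fun x hx => hlN x (List.mem_of_mem_take hx)
  have hright := H b (l.drop (m - 1 + 1)) (by rw [List.length_drop]; omega)
    (hlN b (List.getElem_mem _)) fun x hx => hlN x (List.mem_of_mem_drop hx)
  rw [hl_eq, List.foldl_append_cons]
  exact hσ M hM _ _ hleft hright

theorem HasPowBound.size_foldl_le (hσ : HasPowBound size σ j) (hj : 1 < j) {N : ℕ} (hN : 2 ≤ N)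
    (n : ℕ) (a : α) (l : List α) (hl : l.length < 2 ^ n) (ha : size a ≤ N)
    (hlN : ∀ x ∈ l, size x ≤ N) : size (l.foldl σ a) ≤ N ^ j ^ n := by
  induction n generalizing a l with
  | zero =>
    obtain rfl : l = [] := List.length_eq_zero_iff.mp (by simpa using hl)
    simpa using ha
  | succ n ih =>
    have hM : 2 ≤ N ^ j ^ n := hN.trans (Nat.le_self_pow (by positivity) N)
    rw [pow_succ, pow_mul]
    exact (HasPowBound.size_foldl_lt_of_length_lt_two_mul hσ hj hM ih
      (by rw [pow_succ] at hl; omega) ha hlN).le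

theorem HasPowBound.size_foldl_lt (hσ : HasPowBound size σ j) (hj : 1 < j) {N : ℕ} (hN : 2 ≤ N)
    {n : ℕ} (hn : n ≠ 0) {a : α} {l : List α} (hl : l.length < 2 ^ n) (ha : size a ≤ N)
    (hlN : ∀ x ∈ l, size x ≤ N) : size (l.foldl σ a) < N ^ j ^ n := by
  obtain ⟨n, rfl⟩ := Nat.exists_eq_add_one_of_ne_zero hn
  have hM : 2 ≤ N ^ j ^ n := hN.trans (Nat.le_self_pow (by positivity) N)
  rw [pow_succ, pow_mul]
  exact HasPowBound.size_foldl_lt_of_length_lt_two_mul hσ hj hM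
    (HasPowBound.size_foldl_le hσ hj hN n) (by rw [pow_succ] at hl; omega) ha hlN

end PowBound

/-- If a total, associative σ has polynomially bounded outputs,
then there is j > 1 such that for all k > 1 and strings s₁, …, s_k,
|s₁ σ ⋯ σ s_k| < (max{2, |s₁|, …, |s_k|})^(j^⌈log₂ k⌉). -/
theorem stmt_6 (σ : List Bool → List Bool → List Bool)
    (hassoc : ∀ x y z : List Bool, σ (σ x y) z = σ x (σ y z))
    (p : Polynomial ℕ)
    (hpoly : ∀ s₁ s₂ : List Bool,
      (σ s₁ s₂).length < p.eval (max s₁.length s₂.length)) :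
    ∃ j : ℕ, 1 < j ∧
      ∀ (k : ℕ), 1 < k → ∀ (s₁ : List Bool) (rest : List (List Bool)),
        rest.length + 1 = k →
        (rest.foldl σ s₁).length <
          ((rest.map List.length).foldl max (max 2 s₁.length)) ^ (j ^ Nat.clog 2 k) := by
  have : Std.Associative σ := ⟨hassoc⟩
  have hσ : HasPowBound List.length σ (p.eval 1 + p.natDegree + 2) :=
    hasPowBound_of_lt_eval hpoly (by omega)
  refine ⟨p.eval 1 + p.natDegree + 2, by omega, fun k hk s₁ rest hrest => ?_⟩
  set N := (rest.map List.length).foldl max (max 2 s₁.length)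
  have hN : max 2 s₁.length ≤ N := by simp only [N, List.foldl_max]; exact le_sup_left
  have hrestN : ∀ x ∈ rest, x.length ≤ N := fun x hx => by
    simp only [N, List.foldl_eq_foldr]
    exact List.le_max_of_le' _ (List.mem_map_of_mem hx) le_rfl
  refine HasPowBound.size_foldl_lt hσ (by omega) (le_of_max_le_left hN)
    (Nat.clog_pos one_lt_two hk).ne' ?_ (le_of_max_le_right hN) hrestN
  have := Nat.le_pow_clog one_lt_two k
  omega
end
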